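/- arXiv:1510.07525 — 2 statements merged into one kernel-verified Lean document; each statement's English description precedes it below -/
import Mathlib

section
/- Let H be a real Hilbert space, K ⊆ H a closed subspace with orthogonal projection P : H → K, and let f : H → ℝ be Fréchet differentiable with gradient ∇f : H → H (i.e. the Fréchet derivative satisfies f′(x)(v) = ⟪∇f(x), v⟫ for all x, v). Assume ∇f is α-strongly monotone on K for some α > 0. If z_γ ∈ K is a local minimum of f restricted to K, then for every z ∈ K one has ‖z − z_γ‖ ≤ (1/α)·‖P(∇f(z))‖ ≤ (1/α)·‖∇f(z)‖. -/
/-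
At a local minimum of `f` on the subspace `K` the gradient is orthogonal to `K`, since every
direction `v ∈ K` and its negative are admissible. Strong monotonicity then gives
`α ‖z - z_γ‖² ≤ ⟪∇f z - ∇f z_γ, z - z_γ⟫ = ⟪∇f z, z - z_γ⟫ = ⟪P (∇f z), z - z_γ⟫`, and
Cauchy–Schwarz finishes; the second inequality is `‖P‖ ≤ 1`.
-/

open scoped RealInnerProductSpace

theorem Submodule.inner_eq_zero_of_hasGradientAt_of_isLocalMinOn {H : Type*}
    [NormedAddCommGroup H] [InnerProductSpace ℝ H] [CompleteSpace H] (K : Submodule ℝ H)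
    {f : H → ℝ} {g x : H} (hf : HasGradientAt f g x) (hx : x ∈ K)
    (hmin : IsLocalMinOn f K x) {v : H} (hv : v ∈ K) : ⟪g, v⟫ = 0 := by
  have hcone : ∀ w ∈ K, w ∈ posTangentConeAt (K : Set H) x := fun w hw =>
    mem_posTangentConeAt_of_segment_subset
      (K.convex.segment_subset hx (K.add_mem hx hw))
  simpa using hmin.hasFDerivWithinAt_eq_zero hf.hasFDerivAt.hasFDerivWithinAt
    (hcone v hv) (hcone (-v) (K.neg_mem hv))

theorem norm_le_of_mul_sq_norm_le_inner {H : Type*}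
    [NormedAddCommGroup H] [InnerProductSpace ℝ H] {α : ℝ} (hα : 0 < α) {g u : H}
    (h : α * ‖u‖ ^ 2 ≤ ⟪g, u⟫) : ‖u‖ ≤ 1 / α * ‖g‖ := by
  have hcs : α * ‖u‖ ^ 2 ≤ ‖g‖ * ‖u‖ := h.trans (real_inner_le_norm g u)
  rw [one_div_mul_eq_div, le_div_iff₀ hα]
  rcases (norm_nonneg u).eq_or_lt with hu | hu
  · simp [← hu]
  · exact le_of_mul_le_mul_left (by linarith) hu

theorem isLocalMinOn_of_forall_norm_sub_lt {H : Type*} [SeminormedAddCommGroup H]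
    {f : H → ℝ} {s : Set H} {a : H}
    (h : ∃ ε > 0, ∀ y ∈ s, ‖y - a‖ < ε → f a ≤ f y) : IsLocalMinOn f s a := by
  obtain ⟨ε, hε, h⟩ := h
  exact eventually_nhdsWithin_iff.2 (Metric.eventually_nhds_iff.2
    ⟨ε, hε, fun y hy hys => h y hys (by rwa [← dist_eq_norm])⟩)

theorem stmt_1_general {H : Type*} [NormedAddCommGroup H] [InnerProductSpace ℝ H] [CompleteSpace H]
    (K : Submodule ℝ H) [K.HasOrthogonalProjection]
    (f : H → ℝ) (gradf : H → H) (hdiff : ∀ x, HasGradientAt f (gradf x) x)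
    (α : ℝ) (hα : 0 < α)
    (hmono : ∀ z₁ ∈ K, ∀ z₂ ∈ K, α * ‖z₁ - z₂‖ ^ 2 ≤ ⟪gradf z₁ - gradf z₂, z₁ - z₂⟫)
    (zγ : H) (hzγ : zγ ∈ K)
    (hmin : ∃ ε > 0, ∀ y ∈ K, ‖y - zγ‖ < ε → f zγ ≤ f y) :
    ∀ z ∈ K, ‖z - zγ‖ ≤ (1 / α) * ‖(K.orthogonalProjectionOnto (gradf z) : H)‖ ∧
      (1 / α) * ‖(K.orthogonalProjectionOnto (gradf z) : H)‖ ≤ (1 / α) * ‖gradf z‖ := by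
  have hcrit : ∀ v ∈ K, ⟪gradf zγ, v⟫ = 0 := fun v hv =>
    K.inner_eq_zero_of_hasGradientAt_of_isLocalMinOn (hdiff zγ) hzγ
      (isLocalMinOn_of_forall_norm_sub_lt hmin) hv
  intro z hz
  have hsub : z - zγ ∈ K := K.sub_mem hz hzγ
  refine ⟨norm_le_of_mul_sq_norm_le_inner hα ?_, by
    gcongr; exact K.norm_orthogonalProjectionOnto_apply_le _⟩
  calc α * ‖z - zγ‖ ^ 2 ≤ ⟪gradf z - gradf zγ, z - zγ⟫ := hmono z hz zγ hzγ
    _ = ⟪gradf z, z - zγ⟫ := by rw [inner_sub_left, hcrit _ hsub, sub_zero]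
    _ = ⟪(K.orthogonalProjectionOnto (gradf z) : H), z - zγ⟫ :=
      (K.inner_orthogonalProjectionOnto_eq_of_mem_right ⟨_, hsub⟩ _).symm

/-- Let `H` be a real Hilbert space, `K ⊆ H` a closed subspace with
orthogonal projection `P : H → K`, and let `f : H → ℝ` be Fréchet differentiable with
gradient `∇f : H → H`. Assume `∇f` is `α`-strongly monotone on `K` for some `α > 0`.
If `z_γ ∈ K` is a local minimum of `f` restricted to `K`, then for every `z ∈ K` one has
`‖z − z_γ‖ ≤ (1/α)·‖P (∇f z)‖ ≤ (1/α)·‖∇f z‖`. -/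
theorem stmt_1 {H : Type*} [NormedAddCommGroup H] [InnerProductSpace ℝ H] [CompleteSpace H]
    (K : Submodule ℝ H) (hK : IsClosed (K : Set H)) [K.HasOrthogonalProjection]
    (f : H → ℝ) (gradf : H → H) (hdiff : ∀ x, HasGradientAt f (gradf x) x)
    (α : ℝ) (hα : 0 < α)
    (hmono : ∀ z₁ ∈ K, ∀ z₂ ∈ K, α * ‖z₁ - z₂‖ ^ 2 ≤ ⟪gradf z₁ - gradf z₂, z₁ - z₂⟫)
    (zγ : H) (hzγ : zγ ∈ K)
    (hmin : ∃ ε > 0, ∀ y ∈ K, ‖y - zγ‖ < ε → f zγ ≤ f y) :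
    ∀ z ∈ K, ‖z - zγ‖ ≤ (1 / α) * ‖(K.orthogonalProjectionOnto (gradf z) : H)‖ ∧
      (1 / α) * ‖(K.orthogonalProjectionOnto (gradf z) : H)‖ ≤ (1 / α) * ‖gradf z‖ :=
  stmt_1_general K f gradf hdiff α hα hmono zγ hzγ hmin
end

section
/- Let H be a real normed vector space, V ⊆ H a subspace, f : H → ℝ, z ∈ H, z_h ∈ V, and M ≥ 0. Assume: (i) f is twice continuously differentiable on an open set containing the closed segment [z_h, z], with ‖f″(x)‖ ≤ M for all x in the segment; (ii) the Galerkin orthogonality f′(z_h)(v) = 0 holds for all v ∈ V. Then for every w ∈ V, |f(z) − f(z_h)| ≤ ‖f′(z_h)‖·‖z − w‖ + (M/2)·‖z − z_h‖². -/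
/-!
Split `z - z_h = (z - w) + (w - z_h)`: by Galerkin orthogonality `f′(z_h)` kills `w - z_h`, so
`f z - f z_h = f′(z_h)(z - w) + R` with `R` the first-order Taylor remainder along `[z_h, z]`.
The bound on `f″` makes `f′` an `M`-Lipschitz map on the segment, and integrating this
Lipschitz bound along the segment gives `|R| ≤ (M/2)‖z - z_h‖²`.
-/

open Set

section TaylorRemainder

variable {E F : Type*} [NormedAddCommGroup E] [NormedSpace ℝ E]
  [NormedAddCommGroup F] [NormedSpace ℝ F]

theorem norm_sub_sub_deriv_le_of_norm_deriv_sub_le {φ φ' : ℝ → F} {K : ℝ}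
    (hφ : ∀ t ∈ Icc (0 : ℝ) 1, HasDerivAt φ (φ' t) t)
    (hK : ∀ t ∈ Icc (0 : ℝ) 1, ‖φ' t - φ' 0‖ ≤ K * t) :
    ‖φ 1 - φ 0 - φ' 0‖ ≤ K / 2 := by
  set ψ : ℝ → F := fun t => φ t - φ 0 - t • φ' 0
  have hψ : ∀ t ∈ Icc (0 : ℝ) 1, HasDerivAt ψ (φ' t - φ' 0) t := fun t ht =>
    (((hφ t ht).sub_const (φ 0)).sub ((hasDerivAt_id t).smul_const (φ' 0))).congr_deriv
      (by rw [one_smul])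
  have hB : ∀ t : ℝ, HasDerivAt (fun s : ℝ => K / 2 * s ^ 2) (K * t) t := fun t => by
    refine ((hasDerivAt_pow 2 t).const_mul (K / 2)).congr_deriv ?_
    push_cast
    ring
  have key := image_norm_le_of_norm_deriv_right_le_deriv_boundary
    (fun t ht => (hψ t ht).continuousAt.continuousWithinAt)
    (fun t ht => (hψ t (Ico_subset_Icc_self ht)).hasDerivWithinAt)
    (by simp [ψ]) hB (fun t ht => hK t (Ico_subset_Icc_self ht))
    (right_mem_Icc.2 zero_le_one)
  simpa [ψ] using key

theorem norm_image_sub_sub_fderiv_le_of_lipschitz_fderiv {f : E → F} {f' : E → E →L[ℝ] F}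
    {a b : E} {C : ℝ} (hf : ∀ x ∈ segment ℝ a b, HasFDerivAt f (f' x) x)
    (hf' : ∀ x ∈ segment ℝ a b, ‖f' x - f' a‖ ≤ C * ‖x - a‖) :
    ‖f b - f a - f' a (b - a)‖ ≤ C / 2 * ‖b - a‖ ^ 2 := by
  set γ : ℝ → E := fun t => a + t • (b - a)
  have hγ : ∀ t ∈ Icc (0 : ℝ) 1, γ t ∈ segment ℝ a b := fun t ht => by
    rw [segment_eq_image']
    exact ⟨t, ht, rfl⟩
  have hderiv : ∀ t ∈ Icc (0 : ℝ) 1,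
      HasDerivAt (f ∘ γ) (f' (γ t) (b - a)) t := fun t ht => by
    refine (hf _ (hγ t ht)).comp_hasDerivAt t ?_
    exact (((hasDerivAt_id t).smul_const (b - a)).const_add a).congr_deriv (one_smul ℝ _)
  have hlip : ∀ t ∈ Icc (0 : ℝ) 1,
      ‖f' (γ t) (b - a) - f' (γ 0) (b - a)‖ ≤ C * ‖b - a‖ ^ 2 * t := fun t ht => by
    have hγa : ‖γ t - a‖ = t * ‖b - a‖ := by simp [γ, norm_smul, abs_of_nonneg ht.1]
    calc ‖f' (γ t) (b - a) - f' (γ 0) (b - a)‖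
        ≤ ‖f' (γ t) - f' a‖ * ‖b - a‖ := by
          simpa [γ] using (f' (γ t) - f' a).le_opNorm (b - a)
      _ ≤ C * (t * ‖b - a‖) * ‖b - a‖ := by
          gcongr
          exact hγa ▸ hf' _ (hγ t ht)
      _ = C * ‖b - a‖ ^ 2 * t := by ring
  have key := norm_sub_sub_deriv_le_of_norm_deriv_sub_le hderiv hlip
  simp only [Function.comp_apply, γ, zero_smul, add_zero, one_smul, add_sub_cancel] at key
  linarith

theorem norm_fderivWithin_sub_le_of_norm_iteratedFDerivWithin_two_le {f : E → F} {U s : Set E}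
    {M : ℝ} (hU : UniqueDiffOn ℝ U) (hf : ContDiffOn ℝ 2 f U) (hs : Convex ℝ s) (hsU : s ⊆ U)
    (hbound : ∀ x ∈ s, ‖iteratedFDerivWithin ℝ 2 f U x‖ ≤ M) {x y : E} (hx : x ∈ s)
    (hy : y ∈ s) : ‖fderivWithin ℝ f U y - fderivWithin ℝ f U x‖ ≤ M * ‖y - x‖ := by
  have hdiff : DifferentiableOn ℝ (fderivWithin ℝ f U) U :=
    (hf.fderivWithin hU (by norm_num)).differentiableOn one_ne_zero
  refine hs.norm_image_sub_le_of_norm_hasFDerivWithin_le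
    (fun u hu => ((hdiff u (hsU hu)).hasFDerivWithinAt).mono hsU) (fun u hu => ?_) hx hy
  rw [← norm_iteratedFDerivWithin_one _ (hU u (hsU hu)),
    norm_iteratedFDerivWithin_fderivWithin hU (hsU hu)]
  exact hbound u hu

end TaylorRemainder

theorem stmt_5_general {H : Type*} [NormedAddCommGroup H] [NormedSpace ℝ H]
    (V : Submodule ℝ H) (f : H → ℝ) (z zh : H) (hzh : zh ∈ V) (M : ℝ)
    (U : Set H) (hU : IsOpen U) (hseg : segment ℝ zh z ⊆ U)
    (hf : ContDiffOn ℝ 2 f U)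
    (hbound : ∀ x ∈ segment ℝ zh z, ‖iteratedFDerivWithin ℝ 2 f U x‖ ≤ M)
    (hgal : ∀ v ∈ V, fderivWithin ℝ f U zh v = 0) :
    ∀ w ∈ V, |f z - f zh| ≤ ‖fderivWithin ℝ f U zh‖ * ‖z - w‖ + (M / 2) * ‖z - zh‖ ^ 2 := by
  intro w hw
  set L := fderivWithin ℝ f U zh
  have hderiv : ∀ x ∈ segment ℝ zh z, HasFDerivAt f (fderivWithin ℝ f U x) x := fun x hx => by
    rw [fderivWithin_of_isOpen hU (hseg hx)]
    exact ((hf.differentiableOn two_ne_zero).differentiableAt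
      (hU.mem_nhds (hseg hx))).hasFDerivAt
  have hremainder : |f z - f zh - L (z - zh)| ≤ M / 2 * ‖z - zh‖ ^ 2 :=
    norm_image_sub_sub_fderiv_le_of_lipschitz_fderiv hderiv fun x hx =>
      norm_fderivWithin_sub_le_of_norm_iteratedFDerivWithin_two_le hU.uniqueDiffOn hf
        (convex_segment zh z) hseg hbound (left_mem_segment ℝ zh z) hx
  have hgalerkin : L (z - zh) = L (z - w) := by
    rw [← sub_add_sub_cancel z w zh, map_add, hgal _ (V.sub_mem hw hzh), add_zero]
  calc |f z - f zh| = |L (z - w) + (f z - f zh - L (z - zh))| := by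
        rw [hgalerkin, add_sub_cancel]
    _ ≤ |L (z - w)| + |f z - f zh - L (z - zh)| := abs_add_le _ _
    _ ≤ ‖L‖ * ‖z - w‖ + M / 2 * ‖z - zh‖ ^ 2 := add_le_add (L.le_opNorm _) hremainder

/-- Let `H` be a real normed vector space, `V ⊆ H` a subspace,
`f : H → ℝ`, `z ∈ H`, `z_h ∈ V`, and `M ≥ 0`. Assume: (i) `f` is twice continuously
differentiable on an open set `U` containing the closed segment `[z_h, z]`, with
`‖f″(x)‖ ≤ M` for all `x` in the segment; (ii) the Galerkin orthogonality
`f′(z_h)(v) = 0` holds for all `v ∈ V`. Then for every `w ∈ V`,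
`|f z − f z_h| ≤ ‖f′(z_h)‖·‖z − w‖ + (M/2)·‖z − z_h‖²`. -/
theorem stmt_5 {H : Type*} [NormedAddCommGroup H] [NormedSpace ℝ H]
    (V : Submodule ℝ H) (f : H → ℝ) (z zh : H) (hzh : zh ∈ V) (M : ℝ) (hM : 0 ≤ M)
    (U : Set H) (hU : IsOpen U) (hseg : segment ℝ zh z ⊆ U)
    (hf : ContDiffOn ℝ 2 f U)
    (hbound : ∀ x ∈ segment ℝ zh z, ‖iteratedFDerivWithin ℝ 2 f U x‖ ≤ M)
    (hgal : ∀ v ∈ V, fderivWithin ℝ f U zh v = 0) :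
    ∀ w ∈ V, |f z - f zh| ≤ ‖fderivWithin ℝ f U zh‖ * ‖z - w‖ + (M / 2) * ‖z - zh‖ ^ 2 :=
  stmt_5_general V f z zh hzh M U hU hseg hf hbound hgal
end
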